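/- arXiv:1812.02904 — 5 statements merged into one kernel-verified Lean document; each statement's English description precedes it below -/
import Mathlib

section
/- Define C₁ = {(0, 6n) : n ∈ ℤ}, C₂ = {(1, 2n) : n ∈ ℤ}, C₃ = {(2, 1 + 2n) : n ∈ ℤ}, C₄ = {(3, 1 + 6n) : n ∈ ℤ}. Then for any i ≠ j, any segment from a point of C_i to a point of C_j contains no interior integer points. -/
/-!
The classes have distinct abscissae `0, 1, 2, 3`, and their ordinates are chosen so that two
points whose abscissae differ by `2` have ordinates of different parity, and two points whose
abscissae differ by `3` have ordinates that are incongruent mod `3`. Hence the difference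
vector of two points from distinct classes is primitive, and a segment with primitive
direction vector has no lattice points in its interior: pairing `c - a = t (b - a)` with
Bézout coefficients shows that `t` is an integer.
-/

theorem not_exists_interior_lattice_point_of_isCoprime {a b : ℤ × ℤ}
    (h : IsCoprime (b.1 - a.1) (b.2 - a.2)) :
    ¬ ∃ (c : ℤ × ℤ) (t : ℝ), 0 < t ∧ t < 1 ∧
      (c.1 : ℝ) = a.1 + t * (b.1 - a.1) ∧ (c.2 : ℝ) = a.2 + t * (b.2 - a.2) := by
  rintro ⟨c, t, ht₀, ht₁, hc₁, hc₂⟩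
  obtain ⟨u, v, huv⟩ := h
  have huv' : (u : ℝ) * (b.1 - a.1) + v * (b.2 - a.2) = 1 := by exact_mod_cast huv
  have ht : ((u * (c.1 - a.1) + v * (c.2 - a.2) : ℤ) : ℝ) = t := by
    push_cast
    linear_combination u * hc₁ + v * hc₂ + t * huv'
  rw [← ht] at ht₀ ht₁
  norm_cast at ht₀ ht₁
  omega

def latticeClass : Fin 4 → Set (ℤ × ℤ)
  | 0 => {p | ∃ n : ℤ, p = (0, 6 * n)}
  | 1 => {p | ∃ n : ℤ, p = (1, 2 * n)}
  | 2 => {p | ∃ n : ℤ, p = (2, 1 + 2 * n)}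
  | 3 => {p | ∃ n : ℤ, p = (3, 1 + 6 * n)}

theorem isCoprime_sub_of_mem_latticeClass {i j : Fin 4} (hij : i ≠ j) {a b : ℤ × ℤ}
    (ha : a ∈ latticeClass i) (hb : b ∈ latticeClass j) :
    IsCoprime (b.1 - a.1) (b.2 - a.2) := by
  wlog hlt : i < j generalizing i j a b
  · have := this hij.symm hb ha (lt_of_le_of_ne (not_lt.1 hlt) hij.symm)
    rwa [← neg_sub b.1, ← neg_sub b.2, IsCoprime.neg_neg_iff] at this
  fin_cases i <;> fin_cases j <;> try exact absurd hlt (by decide)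
  all_goals obtain ⟨m, rfl⟩ := ha; obtain ⟨n, rfl⟩ := hb; norm_num only
  all_goals first
    | exact isCoprime_one_left
    | exact Int.prime_two.coprime_iff_not_dvd.2 (by omega)
    | exact Int.prime_three.coprime_iff_not_dvd.2 (by omega)

/-- With `C₁ = {(0,6n)}`, `C₂ = {(1,2n)}`, `C₃ = {(2,1+2n)}`, `C₄ = {(3,1+6n)}`,
any segment from a point of `C_i` to a point of `C_j` with `i ≠ j` contains no
interior integer points. -/
theorem segments_between_distinct_classes_no_interior_points
    (C : Fin 4 → Set (ℤ × ℤ))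
    (hC0 : C 0 = {p | ∃ n : ℤ, p = (0, 6 * n)})
    (hC1 : C 1 = {p | ∃ n : ℤ, p = (1, 2 * n)})
    (hC2 : C 2 = {p | ∃ n : ℤ, p = (2, 1 + 2 * n)})
    (hC3 : C 3 = {p | ∃ n : ℤ, p = (3, 1 + 6 * n)})
    (i j : Fin 4) (hij : i ≠ j) (a b : ℤ × ℤ) (ha : a ∈ C i) (hb : b ∈ C j) :
    ¬ ∃ (c : ℤ × ℤ) (t : ℝ), 0 < t ∧ t < 1 ∧
      (c.1 : ℝ) = a.1 + t * (b.1 - a.1) ∧ (c.2 : ℝ) = a.2 + t * (b.2 - a.2) := by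
  have hC : C = latticeClass := by
    funext k
    fin_cases k <;> assumption
  subst hC
  exact not_exists_interior_lattice_point_of_isCoprime
    (isCoprime_sub_of_mem_latticeClass hij ha hb)
end

section
/- If a finite simple graph G is 4-colorable, then there exists an injective map f from the vertices of G to ℤ² such that for every edge {u, v} of G, gcd(f(u)₁ - f(v)₁, f(u)₂ - f(v)₂) = 1. -/
lemma seq_emb_gcd_aux {a b : ℤ} (ha : a ≠ 0) (habs : a.natAbs ≤ 3)
    (h2 : (2:ℤ) ∣ a → ¬ (2:ℤ) ∣ b) (h3 : (3:ℤ) ∣ a → ¬ (3:ℤ) ∣ b) :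
    Int.gcd a b = 1 := by
  have h1 : (Int.gcd a b : ℤ) ∣ a := Int.gcd_dvd_left a b
  have h1' : (Int.gcd a b : ℤ) ∣ b := Int.gcd_dvd_right a b
  have hd : Int.gcd a b ∣ a.natAbs := Nat.gcd_dvd_left _ _
  have hpos : 0 < a.natAbs := Int.natAbs_pos.mpr ha
  have hle : Int.gcd a b ≤ 3 := le_trans (Nat.le_of_dvd hpos hd) habs
  have hne : Int.gcd a b ≠ 0 := by
    intro hg
    exact ha (Int.gcd_eq_zero_iff.mp hg).1
  have h1le : 1 ≤ Int.gcd a b := Nat.one_le_iff_ne_zero.mpr hne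
  interval_cases hg : Int.gcd a b
  · rfl
  · exact absurd (by exact_mod_cast h1' : (2:ℤ) ∣ b) (h2 (by exact_mod_cast h1))
  · exact absurd (by exact_mod_cast h1' : (3:ℤ) ∣ b) (h3 (by exact_mod_cast h1))

/-- If a finite simple graph `G` is 4-colorable, then `G` has a sequential embedding
in `ℝ²`: an injective map `f : V → ℤ²` with `gcd(f(u)₁ - f(v)₁, f(u)₂ - f(v)₂) = 1`
for every edge `{u,v}`. -/
theorem sequential_embedding_of_colorable_four {V : Type*} [Fintype V]
    (G : SimpleGraph V) (h : G.Colorable 4) :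
    ∃ f : V → ℤ × ℤ, Function.Injective f ∧
      ∀ u v, G.Adj u v → Int.gcd ((f u).1 - (f v).1) ((f u).2 - (f v).2) = 1 := by
  obtain ⟨C⟩ := h
  classical
  let e := Fintype.equivFin V
  let r : ℕ → ℤ := fun n => if n ≤ 1 then 0 else 1
  refine ⟨fun v => (((C v).val : ℤ), 12 * ((e v).val : ℤ) + r (C v).val), ?_, ?_⟩
  · intro u v huv
    simp only [Prod.mk.injEq] at huv
    obtain ⟨h1, h2⟩ := huv
    have hc : (C u).val = (C v).val := by exact_mod_cast h1
    rw [hc] at h2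
    have h3 : ((e u).val : ℤ) = ((e v).val : ℤ) := by linarith
    have h4 : (e u).val = (e v).val := by exact_mod_cast h3
    exact e.injective (Fin.ext h4)
  · intro u v huv
    have hc : C u ≠ C v := C.valid huv
    have hne : (C u).val ≠ (C v).val := fun h => hc (Fin.ext h)
    have hi : (C u).val < 4 := (C u).isLt
    have hj : (C v).val < 4 := (C v).isLt
    simp only
    apply seq_emb_gcd_aux
    · have : ((C u).val : ℤ) ≠ ((C v).val : ℤ) := by exact_mod_cast hne
      omega
    · omega
    · have hvu : (C u).val = 0 ∨ (C u).val = 1 ∨ (C u).val = 2 ∨ (C u).val = 3 := by omega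
      have hvv : (C v).val = 0 ∨ (C v).val = 1 ∨ (C v).val = 2 ∨ (C v).val = 3 := by omega
      rcases hvu with h'|h'|h'|h' <;> rcases hvv with h''|h''|h''|h'' <;>
        rw [h', h''] at hne ⊢ <;> norm_num [r] <;> omega
    · have hvu : (C u).val = 0 ∨ (C u).val = 1 ∨ (C u).val = 2 ∨ (C u).val = 3 := by omega
      have hvv : (C v).val = 0 ∨ (C v).val = 1 ∨ (C v).val = 2 ∨ (C v).val = 3 := by omega
      rcases hvu with h'|h'|h'|h' <;> rcases hvv with h''|h''|h''|h'' <;>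
        rw [h', h''] at hne ⊢ <;> norm_num [r] <;> omega
end

section
/- A finite simple graph G admits a sequential embedding in ℝ^d (for d ≥ 2) if and only if G is 2^d-colorable. -/
/-!
Reducing a sequential embedding `f` modulo 2 gives a proper colouring by the `2^d` parity
vectors: if adjacent vertices had the same parity vector, 2 would divide every coordinate of
`f u - f v`. Conversely, given a colouring by parity vectors `p`, place each vertex at a lattice
point of parity class `p` so that points of different classes differ by a primitive vector:
outside a fixed coordinate plane the coordinates are the bits of `p` themselves, so any
difference there is `±1`; inside the plane the four bit pairs go to the lines `x = 0, 1, 2, 3`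
with the height chosen modulo 6 so that points on lines at distance 2 or 3 are visible from
each other. Distinct vertices of the same class get distinct heights.
-/

open Finset Function

theorem Int.finset_gcd_eq_one_of_isCoprime {ι : Type*} {s : Finset ι} {x : ι → ℤ} {i j : ι}
    (hi : i ∈ s) (hj : j ∈ s) (h : IsCoprime (x i) (x j)) : s.gcd x = 1 :=
  Finset.normalize_gcd.symm.trans <|
    normalize_eq_one.mpr <| h.isUnit_of_dvd' (gcd_dvd hi) (gcd_dvd hj)

theorem ZMod.isUnit_val_sub_val_of_ne {x y : ZMod 2} (h : x ≠ y) :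
    IsUnit ((x.val : ℤ) - y.val) := by
  rw [Int.isUnit_iff]
  revert x y
  decide

namespace SimpleGraph

variable {V ι : Type*} [Fintype ι]

theorem colorable_card_iff_nonempty_coloring {G : SimpleGraph V} {α : Type*} [Fintype α] :
    G.Colorable (Fintype.card α) ↔ Nonempty (G.Coloring α) :=
  ⟨fun h => ⟨h.toColoring le_rfl⟩, fun ⟨C⟩ => C.colorable⟩

def IsSequentialEmbedding (G : SimpleGraph V) (f : V → ι → ℤ) : Prop :=
  Injective f ∧ ∀ u v, G.Adj u v → univ.gcd (f u - f v) = 1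

def parityColoring (G : SimpleGraph V) (f : V → ι → ℤ)
    (hf : ∀ u v, G.Adj u v → univ.gcd (f u - f v) = 1) : G.Coloring (ι → ZMod 2) :=
  Coloring.mk (fun v i => (f v i : ZMod 2)) fun {u v} huv hpar => by
    have h2 : (2 : ℤ) ∣ univ.gcd (f u - f v) := dvd_gcd fun i _ =>
      (ZMod.intCast_eq_intCast_iff_dvd_sub _ _ 2).mp (congrFun hpar i).symm
    rw [hf u v huv] at h2
    norm_num at h2

end SimpleGraph

section ParityPoint

variable {ι : Type*} [DecidableEq ι] (i₀ i₁ : ι)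

def parityPoint (p : ι → ZMod 2) (n : ℕ) : ι → ℤ := fun i =>
  if i = i₀ then (p i₀).val + 2 * (p i₁).val
  else if i = i₁ then 6 * n + (p i₁).val
  else (p i).val

/-- The horizontal offset of two distinct points in the plane divides 6, and when it is `±2` or
`±3` their heights differ by `±1` modulo 6. -/
theorem isCoprime_parityPoint_plane_sub {x y z w : ZMod 2} (h : x ≠ z ∨ y ≠ w) (k : ℤ) :
    IsCoprime ((x.val + 2 * y.val : ℤ) - (z.val + 2 * w.val)) (6 * k + ((y.val : ℤ) - w.val)) := by
  obtain ⟨⟨t, ht⟩, hcop⟩ : ((x.val + 2 * y.val : ℤ) - (z.val + 2 * w.val)) ∣ 6 ∧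
      Int.gcd ((x.val + 2 * y.val : ℤ) - (z.val + 2 * w.val)) ((y.val : ℤ) - w.val) = 1 := by
    revert x y z w
    decide
  generalize (x.val + 2 * y.val : ℤ) - (z.val + 2 * w.val) = a at ht hcop ⊢
  rw [ht, mul_assoc, add_comm]
  exact (Int.isCoprime_iff_gcd_eq_one.mpr hcop).add_mul_left_right _

variable {i₀ i₁}

theorem parityPoint_apply_right (h : i₀ ≠ i₁) (p : ι → ZMod 2) (n : ℕ) :
    parityPoint i₀ i₁ p n i₁ = 6 * n + (p i₁).val := by
  simp [parityPoint, h.symm]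

theorem gcd_parityPoint_sub [Fintype ι] (h : i₀ ≠ i₁) {p q : ι → ZMod 2} (hpq : p ≠ q)
    (m n : ℕ) : univ.gcd (parityPoint i₀ i₁ p m - parityPoint i₀ i₁ q n) = 1 := by
  by_cases hplane : p i₀ = q i₀ ∧ p i₁ = q i₁
  · obtain ⟨i, hi⟩ := Function.ne_iff.mp hpq
    have hi₀ : i ≠ i₀ := by rintro rfl; exact hi hplane.1
    have hi₁ : i ≠ i₁ := by rintro rfl; exact hi hplane.2
    refine Int.finset_gcd_eq_one_of_isCoprime (mem_univ i) (mem_univ i) (isCoprime_self.mpr ?_)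
    simpa [parityPoint, hi₀, hi₁] using ZMod.isUnit_val_sub_val_of_ne hi
  · refine Int.finset_gcd_eq_one_of_isCoprime (mem_univ i₀) (mem_univ i₁) ?_
    convert isCoprime_parityPoint_plane_sub (not_and_or.mp hplane) (m - n) using 1
    · simp [parityPoint]
    · simp only [Pi.sub_apply, parityPoint_apply_right h]
      ring

end ParityPoint

theorem SimpleGraph.Coloring.exists_isSequentialEmbedding {V ι : Type*} [Countable V]
    [Fintype ι] [DecidableEq ι] {G : SimpleGraph V} (C : G.Coloring (ι → ZMod 2)) {i₀ i₁ : ι}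
    (h : i₀ ≠ i₁) : ∃ f : V → ι → ℤ, G.IsSequentialEmbedding f := by
  obtain ⟨e, he⟩ := Countable.exists_injective_nat V
  refine ⟨fun v => parityPoint i₀ i₁ (C v) (e v), fun u v huv => he ?_, fun u v huv => ?_⟩
  · have hheight := congrFun huv i₁
    simp only [parityPoint_apply_right h] at hheight
    have := ZMod.val_lt (C u i₁)
    have := ZMod.val_lt (C v i₁)
    omega
  · exact gcd_parityPoint_sub h (C.valid huv) _ _

/-- A finite simple graph `G` admits a sequential embedding in `ℝ^d` (for `d ≥ 2`)
if and only if `G` is `2^d`-colorable. -/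
theorem sequential_embedding_iff_colorable {V : Type*} [Fintype V]
    (G : SimpleGraph V) (d : ℕ) (hd : 2 ≤ d) :
    (∃ f : V → Fin d → ℤ, Function.Injective f ∧
        ∀ u v, G.Adj u v → Finset.univ.gcd (fun i => f u i - f v i) = 1) ↔
      G.Colorable (2 ^ d) := by
  have hcard : Fintype.card (Fin d → ZMod 2) = 2 ^ d := by simp
  rw [← hcard, SimpleGraph.colorable_card_iff_nonempty_coloring]
  constructor
  · rintro ⟨f, -, hf⟩
    exact ⟨G.parityColoring f hf⟩
  · rintro ⟨C⟩
    exact C.exists_isSequentialEmbedding (i₀ := ⟨0, by omega⟩) (i₁ := ⟨1, by omega⟩) (by simp)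
end

section
/- If H is an r-segment hypergraph with r ≥ 2, then the strong chromatic number of H is at most r². -/
/-- An `r`-segment hypergraph: vertices in `ℤ²`, each edge consists of `r` consecutive
integer points on a line, and every line in `ℝ²` contains at most one edge. -/
structure RSegmentHypergraph (r : ℕ) where
  edges : Set (Set (ℤ × ℤ))
  edge_consecutive : ∀ E ∈ edges, ∃ v w : ℤ × ℤ, Int.gcd w.1 w.2 = 1 ∧
    E = {p | ∃ k : ℕ, k < r ∧ p = (v.1 + (k : ℤ) * w.1, v.2 + (k : ℤ) * w.2)}
  line_unique : ∀ E ∈ edges, ∀ F ∈ edges,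
    (∀ p ∈ E ∪ F, ∀ q ∈ E ∪ F, ∀ s ∈ E ∪ F,
        (q.1 - p.1) * (s.2 - p.2) = (q.2 - p.2) * (s.1 - p.1)) → E = F

/-!
Colour a lattice point by its pair of coordinates modulo `r`, which gives `r²` colours.
Two points of an edge differ by `(k - l) • w` with `w` primitive and `0 < |k - l| < r`;
since the coordinates of `w` are coprime, `r` cannot divide both coordinates of this
difference, so the two points get different colours.
-/

theorem IsCoprime.eq_zero_of_mul_eq_zero {R : Type*} [CommSemiring R] {a b d : R}
    (hab : IsCoprime a b) (ha : d * a = 0) (hb : d * b = 0) : d = 0 := by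
  obtain ⟨u, v, huv⟩ := hab
  calc d = d * (u * a + v * b) := by rw [huv, mul_one]
    _ = u * (d * a) + v * (d * b) := by ring
    _ = 0 := by rw [ha, hb, mul_zero, mul_zero, add_zero]

theorem injOn_segment_zmod {r : ℕ} {v w : ℤ × ℤ} (hw : Int.gcd w.1 w.2 = 1) :
    Set.InjOn (fun k : ℕ => (((v.1 + k * w.1 : ℤ) : ZMod r), ((v.2 + k * w.2 : ℤ) : ZMod r)))
      (Set.Iio r) := by
  intro k hk l hl hkl
  simp only [Prod.mk.injEq, Int.cast_add, Int.cast_mul, Int.cast_natCast] at hkl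
  have hcop : IsCoprime (w.1 : ZMod r) (w.2 : ZMod r) :=
    (Int.isCoprime_iff_gcd_eq_one.mpr hw).map (Int.castRingHom (ZMod r))
  have hdiff : (k : ZMod r) - l = 0 :=
    hcop.eq_zero_of_mul_eq_zero (by linear_combination hkl.1) (by linear_combination hkl.2)
  rw [sub_eq_zero, ZMod.natCast_eq_natCast_iff', Nat.mod_eq_of_lt hk,
    Nat.mod_eq_of_lt hl] at hdiff
  exact hdiff

/-- If `H` is an `r`-segment hypergraph with `r ≥ 2`, then `χ_s(H) ≤ r²`. -/
theorem strong_chromatic_number_le_sq (r : ℕ) (hr : 2 ≤ r)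
    (H : RSegmentHypergraph r) :
    ∃ c : ℤ × ℤ → Fin (r ^ 2),
      ∀ E ∈ H.edges, ∀ p ∈ E, ∀ q ∈ E, p ≠ q → c p ≠ c q := by
  have : NeZero r := ⟨by omega⟩
  let e : ZMod r × ZMod r ≃ Fin (r ^ 2) := Fintype.equivFinOfCardEq (by simp [sq])
  refine ⟨fun p => e ((p.1 : ZMod r), (p.2 : ZMod r)), ?_⟩
  intro E hE p hp q hq hpq hc
  obtain ⟨v, w, hw, rfl⟩ := H.edge_consecutive E hE
  obtain ⟨k, hk, rfl⟩ := hp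
  obtain ⟨l, hl, rfl⟩ := hq
  exact hpq (by rw [injOn_segment_zmod hw hk hl (e.injective hc)])
end

section
/- For each r ≥ 2, there exists an r-segment hypergraph H whose strong chromatic number equals exactly r². In particular, in the hypergraph whose edges are, for each line L through at least two points of the grid B = {0, ..., r-1}², a set of r consecutive integer points of L containing L ∩ B, any two points of B share an edge. -/
namespace RSeg

/-- the grid B = {0..r-1}² -/
def inB (r : ℕ) (p : ℤ × ℤ) : Prop :=
  0 ≤ p.1 ∧ p.1 < r ∧ 0 ≤ p.2 ∧ p.2 < r

/-- segment of r points from v in direction w -/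
def seg (r : ℕ) (v w : ℤ × ℤ) : Set (ℤ × ℤ) :=
  {p | ∃ k : ℕ, k < r ∧ p = (v.1 + (k : ℤ) * w.1, v.2 + (k : ℤ) * w.2)}

/-- normalized direction -/
def Nrm (w : ℤ × ℤ) : Prop := 0 < w.1 ∨ (w.1 = 0 ∧ 0 < w.2)

/-- coordinate convexity -/
lemma coord_convex {r v w m n : ℤ} (h0 : 0 ≤ v) (hr : v < r)
    (h0n : 0 ≤ v + n * w) (hrn : v + n * w < r) (hm : 0 ≤ m) (hmn : m ≤ n) :
    0 ≤ v + m * w ∧ v + m * w < r := by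
  rcases le_or_gt 0 w with hw | hw
  · constructor <;> nlinarith
  · constructor <;> nlinarith

lemma convex {r : ℕ} {v w : ℤ × ℤ} {m n : ℤ} (hv : inB r v)
    (hn : inB r (v.1 + n * w.1, v.2 + n * w.2)) (hm : 0 ≤ m) (hmn : m ≤ n) :
    inB r (v.1 + m * w.1, v.2 + m * w.2) := by
  obtain ⟨a1, a2, a3, a4⟩ := hv
  obtain ⟨b1, b2, b3, b4⟩ := hn
  obtain ⟨c1, c2⟩ := coord_convex a1 a2 b1 b2 hm hmn
  obtain ⟨d1, d2⟩ := coord_convex a3 a4 b3 b4 hm hmn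
  exact ⟨c1, c2, d1, d2⟩

/-- primitive factor lemma: if w is primitive and w1*b = w2*a then (a,b) = t•w -/
lemma factor {w : ℤ × ℤ} (hg : Int.gcd w.1 w.2 = 1) {a b : ℤ}
    (h : w.1 * b = w.2 * a) : ∃ t : ℤ, a = t * w.1 ∧ b = t * w.2 := by
  have hco : IsCoprime w.1 w.2 := Int.isCoprime_iff_gcd_eq_one.mpr hg
  rcases eq_or_ne w.1 0 with h1 | h1
  · have hw2 : w.2 = 1 ∨ w.2 = -1 := by
      have := hg; rw [h1] at this; simp [Int.gcd] at this; omega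
    refine ⟨b * w.2, ?_, ?_⟩
    · rw [h1, mul_zero]
      rcases hw2 with h2 | h2 <;> rw [h1, h2] at h <;> linarith
    · rcases hw2 with h2 | h2 <;> rw [h2] <;> ring
  · have hd : w.1 ∣ a := by
      have : w.1 ∣ w.2 * a := ⟨b, h.symm ▸ by ring⟩
      exact (hco.dvd_of_dvd_mul_left this)
    obtain ⟨t, ht⟩ := hd
    refine ⟨t, by linarith [ht], ?_⟩
    have : w.1 * b = w.1 * (t * w.2) := by rw [h, ht]; ring
    exact mul_left_cancel₀ h1 this

/-- direction uniqueness -/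
lemma dir_eq {w w' : ℤ × ℤ} (hg : Int.gcd w.1 w.2 = 1) (hg' : Int.gcd w'.1 w'.2 = 1)
    (hn : Nrm w) (hn' : Nrm w') (hc : w.1 * w'.2 = w.2 * w'.1) : w = w' := by
  obtain ⟨t, ht1, ht2⟩ := factor hg hc
  have ht : t = 1 := by
    have habs : t.natAbs = 1 := by
      have hgt : Int.gcd w'.1 w'.2 = t.natAbs * Int.gcd w.1 w.2 := by
        rw [ht1, ht2, Int.gcd_mul_left]
      rw [hg, hg', mul_one] at hgt; omega
    have hpos : 0 < t := by
      rcases hn with h | ⟨h0, h2⟩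
      · rcases hn' with h' | ⟨h0', h2'⟩
        · nlinarith [ht1]
        · exfalso; rw [h0'] at ht1
          have : t = 0 := by nlinarith
          omega
      · rcases hn' with h' | ⟨h0', h2'⟩
        · exfalso
          have hw2 : w.2 = 1 ∨ w.2 = -1 := by
            rw [h0] at hg; simp [Int.gcd] at hg; omega
          rw [h0] at ht1; simp at ht1
          rw [ht1] at h'; simp at h'
        · nlinarith [ht2]
    omega
  rw [ht] at ht1 ht2; simp at ht1 ht2
  exact Prod.ext ht1.symm ht2.symm

/-- edge data -/
def EData (r : ℕ) (v w : ℤ × ℤ) : Prop :=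
  Int.gcd w.1 w.2 = 1 ∧ Nrm w ∧ inB r v ∧ inB r (v.1 + w.1, v.2 + w.2) ∧
    ¬ inB r (v.1 - w.1, v.2 - w.2)

lemma start_le {r : ℕ} {v v' w : ℤ × ℤ} (h : EData r v w) (h' : EData r v' w)
    {t : ℤ} (ht1 : v'.1 - v.1 = t * w.1) (ht2 : v'.2 - v.2 = t * w.2)
    (htpos : 0 ≤ t) : v' = v := by
  rcases eq_or_lt_of_le htpos with h0 | h0
  · rw [← h0] at ht1 ht2; simp at ht1 ht2
    exact Prod.ext (by linarith) (by linarith)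
  · exfalso
    apply h'.2.2.2.2
    have : inB r (v.1 + (t - 1) * w.1, v.2 + (t - 1) * w.2) :=
      convex h.2.2.1 (by
        have : (v.1 + t * w.1, v.2 + t * w.2) = v' := by
          apply Prod.ext <;> simp <;> linarith
        rw [this]; exact h'.2.2.1) (by omega) (by omega)
    have he : (v'.1 - w.1, v'.2 - w.2) = (v.1 + (t - 1) * w.1, v.2 + (t - 1) * w.2) := by
      apply Prod.ext <;> simp <;> ring_nf <;> linarith
    rw [he]; exact this

lemma line_unique_aux {r : ℕ} (hr : 2 ≤ r) {v w v' w' : ℤ × ℤ}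
    (h : EData r v w) (h' : EData r v' w')
    (H : ∀ p ∈ seg r v w ∪ seg r v' w', ∀ q ∈ seg r v w ∪ seg r v' w',
      ∀ s ∈ seg r v w ∪ seg r v' w',
      (q.1 - p.1) * (s.2 - p.2) = (q.2 - p.2) * (s.1 - p.1)) :
    seg r v w = seg r v' w' := by
  have hv : v ∈ seg r v w := ⟨0, by omega, by simp⟩
  have hvw : (v.1 + w.1, v.2 + w.2) ∈ seg r v w := ⟨1, by omega, by simp⟩
  have hv' : v' ∈ seg r v' w' := ⟨0, by omega, by simp⟩
  have hvw' : (v'.1 + w'.1, v'.2 + w'.2) ∈ seg r v' w' := ⟨1, by omega, by simp⟩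
  have c1 := H v (Or.inl hv) (v.1 + w.1, v.2 + w.2) (Or.inl hvw) v' (Or.inr hv')
  have c2 := H v (Or.inl hv) (v.1 + w.1, v.2 + w.2) (Or.inl hvw)
    (v'.1 + w'.1, v'.2 + w'.2) (Or.inr hvw')
  simp only at c1 c2
  have hcross : w.1 * w'.2 = w.2 * w'.1 := by linear_combination c2 - c1
  have hweq : w = w' := dir_eq h.1 h'.1 h.2.1 h'.2.1 hcross
  subst hweq
  have hfac : w.1 * (v'.2 - v.2) = w.2 * (v'.1 - v.1) := by linear_combination c1
  obtain ⟨t, ht1, ht2⟩ := factor h.1 hfac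
  rcases le_or_gt 0 t with ht | ht
  · rw [start_le h h' ht1 ht2 ht]
  · rw [start_le h' h (t := -t) (by linarith [ht1]) (by linarith [ht2]) (by linarith)]

/-- find the edge along the line through p in direction w -/
lemma shared' {r : ℕ} (hr : 2 ≤ r) {p w : ℤ × ℤ} {g : ℤ}
    (hg1 : Int.gcd w.1 w.2 = 1) (hnw : Nrm w) (hgpos : 0 < g)
    (hp : inB r p) (hq : inB r (p.1 + g * w.1, p.2 + g * w.2)) :
    ∃ v : ℤ × ℤ, EData r v w ∧ p ∈ seg r v w ∧
      (p.1 + g * w.1, p.2 + g * w.2) ∈ seg r v w := by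
  classical
  have hw2one : w.1 = 0 → w.2 = 1 := by
    intro h0
    rcases hnw with h | ⟨_, h2⟩
    · omega
    · rw [h0] at hg1; simp [Int.gcd] at hg1; omega
  have hex : ∃ k : ℕ, ¬ inB r (p.1 - k * w.1, p.2 - k * w.2) := by
    refine ⟨r, fun hmem => ?_⟩
    rcases hnw with h | ⟨h0, _⟩
    · have h1 := hmem.1
      have hp1 := hp.2.1
      simp only at h1 hp1 h
      nlinarith
    · have h1 := hmem.2.2.1
      have hp2 := hp.2.2.2
      have h2 := hw2one h0
      simp only at h1 hp2 h0 h2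
      rw [h2] at h1
      nlinarith
  set n := Nat.find hex with hndef
  have hn : ¬ inB r (p.1 - n * w.1, p.2 - n * w.2) := Nat.find_spec hex
  have hn1 : 1 ≤ n := by
    rcases Nat.eq_zero_or_pos n with h0 | h0
    · exfalso; apply hn; rw [h0]; simpa using hp
    · exact h0
  set k₀ : ℕ := n - 1 with hk₀def
  have hkn : (k₀ : ℤ) + 1 = (n : ℤ) := by push_cast; omega
  have hvB : inB r (p.1 - k₀ * w.1, p.2 - k₀ * w.2) := by
    by_contra hcon
    exact absurd (Nat.find_min hex (show k₀ < n by omega)) (by simpa using hcon)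
  have hqB : inB r ((p.1 - k₀ * w.1) + ((k₀ : ℤ) + g) * w.1,
      (p.2 - k₀ * w.2) + ((k₀ : ℤ) + g) * w.2) := by
    have he : ((p.1 - k₀ * w.1) + ((k₀ : ℤ) + g) * w.1,
        (p.2 - k₀ * w.2) + ((k₀ : ℤ) + g) * w.2)
        = (p.1 + g * w.1, p.2 + g * w.2) := by
      simp only [Prod.mk.injEq]; constructor <;> ring
    rw [he]; exact hq
  have hvwB : inB r ((p.1 - k₀ * w.1) + w.1, (p.2 - k₀ * w.2) + w.2) := by
    have := convex (m := 1) (n := (k₀ : ℤ) + g) hvB hqB (by omega) (by omega)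
    simpa using this
  have hvmw : ¬ inB r ((p.1 - k₀ * w.1) - w.1, (p.2 - k₀ * w.2) - w.2) := by
    have he : ((p.1 - k₀ * w.1) - w.1, (p.2 - k₀ * w.2) - w.2)
        = (p.1 - n * w.1, p.2 - n * w.2) := by
      simp only [Prod.mk.injEq]
      exact ⟨by linear_combination (-w.1) * hkn, by linear_combination (-w.2) * hkn⟩
    rw [he]; exact hn
  have hbound : (k₀ : ℤ) + g ≤ (r : ℤ) - 1 := by
    rcases hnw with h | ⟨h0, _⟩
    · have h1 := hvB.1
      have h2 := hqB.2.1
      simp only at h1 h2 h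
      nlinarith
    · have h1 := hvB.2.2.1
      have h3 := hqB.2.2.2
      have h2 := hw2one h0
      simp only at h1 h3 h0 h2
      rw [h2] at h3
      nlinarith
  refine ⟨(p.1 - k₀ * w.1, p.2 - k₀ * w.2), ⟨hg1, hnw, hvB, hvwB, hvmw⟩, ?_, ?_⟩
  · refine ⟨k₀, ?_, ?_⟩
    · have h1 : (k₀ : ℤ) < r := by omega
      exact_mod_cast h1
    · apply Prod.ext <;> simp
  · refine ⟨k₀ + g.toNat, ?_, ?_⟩
    · have h1 : ((k₀ + g.toNat : ℕ) : ℤ) < r := by push_cast; omega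
      exact_mod_cast h1
    · have hgt : ((k₀ + g.toNat : ℕ) : ℤ) = (k₀ : ℤ) + g := by push_cast; omega
      simp only [Prod.mk.injEq, hgt]
      constructor <;> ring

/-- any two distinct grid points with normalized difference share an edge -/
lemma shared {r : ℕ} (hr : 2 ≤ r) {p q : ℤ × ℤ} (hp : inB r p) (hq : inB r q)
    (hnrm : Nrm (q.1 - p.1, q.2 - p.2)) :
    ∃ v w : ℤ × ℤ, EData r v w ∧ p ∈ seg r v w ∧ q ∈ seg r v w := by
  have hdne : q.1 - p.1 ≠ 0 ∨ q.2 - p.2 ≠ 0 := by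
    rcases hnrm with h | ⟨h0, h2⟩
    · exact Or.inl (by simp only at h; omega)
    · exact Or.inr (by simp only at h2; omega)
  have gpos : 0 < Int.gcd (q.1 - p.1) (q.2 - p.2) := by
    rcases hdne with h | h
    · exact Int.gcd_pos_of_ne_zero_left _ h
    · exact Int.gcd_pos_of_ne_zero_right _ h
  set g : ℤ := (Int.gcd (q.1 - p.1) (q.2 - p.2) : ℤ) with hgdef
  have hgpos : 0 < g := by rw [hgdef]; exact_mod_cast gpos
  set w : ℤ × ℤ := ((q.1 - p.1) / g, (q.2 - p.2) / g) with hwdef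
  have hg1 : Int.gcd w.1 w.2 = 1 := Int.gcd_div_gcd_div_gcd gpos
  have hgd1 : g * w.1 = q.1 - p.1 := Int.mul_ediv_cancel' (Int.gcd_dvd_left _ _)
  have hgd2 : g * w.2 = q.2 - p.2 := Int.mul_ediv_cancel' (Int.gcd_dvd_right _ _)
  have hnw : Nrm w := by
    rcases hnrm with h | ⟨h0, h2⟩
    · simp only at h
      left; nlinarith [hgd1]
    · simp only at h0 h2
      right
      constructor
      · nlinarith [hgd1]
      · nlinarith [hgd2]
  have hq' : inB r (p.1 + g * w.1, p.2 + g * w.2) := by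
    have he : (p.1 + g * w.1, p.2 + g * w.2) = q := by
      apply Prod.ext <;> simp <;> linarith
    rw [he]; exact hq
  obtain ⟨v, hd, hpm, hqm⟩ := shared' hr hg1 hnw hgpos hp hq'
  refine ⟨v, w, hd, hpm, ?_⟩
  have he : q = (p.1 + g * w.1, p.2 + g * w.2) := by
    apply Prod.ext <;> simp <;> linarith
  rw [he]; exact hqm

/-- the coloring by coordinates mod r -/
lemma col_lt {r : ℕ} (hr : 0 < r) (p : ℤ × ℤ) :
    (p.1 % r).toNat * r + (p.2 % r).toNat < r ^ 2 := by
  have h0 : (0:ℤ) < r := by exact_mod_cast hr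
  have h1 : 0 ≤ p.1 % r := Int.emod_nonneg _ (by omega)
  have h2 : p.1 % r < r := Int.emod_lt_of_pos _ h0
  have h3 : 0 ≤ p.2 % r := Int.emod_nonneg _ (by omega)
  have h4 : p.2 % r < r := Int.emod_lt_of_pos _ h0
  have h5 : (p.1 % r).toNat < r := by omega
  have h6 : (p.2 % r).toNat < r := by omega
  have : (p.1 % r).toNat * r + (p.2 % r).toNat < r * r := by nlinarith
  rw [pow_two]; exact this

noncomputable def col (r : ℕ) (hr : 0 < r) (p : ℤ × ℤ) : Fin (r ^ 2) :=
  ⟨(p.1 % r).toNat * r + (p.2 % r).toNat, col_lt hr p⟩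

lemma col_proper {r : ℕ} (hr : 0 < r) {v w : ℤ × ℤ} (hg : Int.gcd w.1 w.2 = 1)
    {p q : ℤ × ℤ} (hp : p ∈ seg r v w) (hq : q ∈ seg r v w) (hne : p ≠ q) :
    col r hr p ≠ col r hr q := by
  obtain ⟨k, hk, rfl⟩ := hp
  obtain ⟨l, hl, rfl⟩ := hq
  have hkl : k ≠ l := by rintro rfl; exact hne rfl
  intro hcol
  have h0 : (0:ℤ) < r := by exact_mod_cast hr
  have hval : ((v.1 + (k:ℤ) * w.1) % r).toNat * r + ((v.2 + (k:ℤ) * w.2) % r).toNat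
      = ((v.1 + (l:ℤ) * w.1) % r).toNat * r + ((v.2 + (l:ℤ) * w.2) % r).toNat := by
    exact congrArg Fin.val hcol
  -- separate the two digits
  have e1 : (v.1 + (k:ℤ) * w.1) % r = (v.1 + (l:ℤ) * w.1) % r ∧
      (v.2 + (k:ℤ) * w.2) % r = (v.2 + (l:ℤ) * w.2) % r := by
    have b1 : ((v.1 + (k:ℤ) * w.1) % r).toNat < r := by
      have := Int.emod_lt_of_pos (v.1 + (k:ℤ) * w.1) h0
      have := Int.emod_nonneg (v.1 + (k:ℤ) * w.1) (by omega : (r:ℤ) ≠ 0)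
      omega
    have b2 : ((v.2 + (k:ℤ) * w.2) % r).toNat < r := by
      have := Int.emod_lt_of_pos (v.2 + (k:ℤ) * w.2) h0
      have := Int.emod_nonneg (v.2 + (k:ℤ) * w.2) (by omega : (r:ℤ) ≠ 0)
      omega
    have b3 : ((v.1 + (l:ℤ) * w.1) % r).toNat < r := by
      have := Int.emod_lt_of_pos (v.1 + (l:ℤ) * w.1) h0
      have := Int.emod_nonneg (v.1 + (l:ℤ) * w.1) (by omega : (r:ℤ) ≠ 0)
      omega
    have b4 : ((v.2 + (l:ℤ) * w.2) % r).toNat < r := by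
      have := Int.emod_lt_of_pos (v.2 + (l:ℤ) * w.2) h0
      have := Int.emod_nonneg (v.2 + (l:ℤ) * w.2) (by omega : (r:ℤ) ≠ 0)
      omega
    have nn1 := Int.emod_nonneg (v.1 + (k:ℤ) * w.1) (by omega : (r:ℤ) ≠ 0)
    have nn2 := Int.emod_nonneg (v.2 + (k:ℤ) * w.2) (by omega : (r:ℤ) ≠ 0)
    have nn3 := Int.emod_nonneg (v.1 + (l:ℤ) * w.1) (by omega : (r:ℤ) ≠ 0)
    have nn4 := Int.emod_nonneg (v.2 + (l:ℤ) * w.2) (by omega : (r:ℤ) ≠ 0)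
    have heq1 : ((v.1 + (k:ℤ) * w.1) % r).toNat = ((v.1 + (l:ℤ) * w.1) % r).toNat := by
      rcases Nat.lt_trichotomy (((v.1 + (k:ℤ) * w.1) % r).toNat)
        (((v.1 + (l:ℤ) * w.1) % r).toNat) with h | h | h
      · nlinarith
      · exact h
      · nlinarith
    constructor
    · omega
    · have : ((v.2 + (k:ℤ) * w.2) % r).toNat = ((v.2 + (l:ℤ) * w.2) % r).toNat := by
        rw [heq1] at hval
        exact Nat.add_left_cancel hval
      omega
  have hd1 : (r:ℤ) ∣ ((k:ℤ) - l) * w.1 := by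
    have h := Int.emod_eq_emod_iff_emod_sub_eq_zero.mp e1.1
    have : (v.1 + (k:ℤ) * w.1) - (v.1 + (l:ℤ) * w.1) = ((k:ℤ) - l) * w.1 := by ring
    rw [this] at h
    exact Int.dvd_of_emod_eq_zero h
  have hd2 : (r:ℤ) ∣ ((k:ℤ) - l) * w.2 := by
    have h := Int.emod_eq_emod_iff_emod_sub_eq_zero.mp e1.2
    have : (v.2 + (k:ℤ) * w.2) - (v.2 + (l:ℤ) * w.2) = ((k:ℤ) - l) * w.2 := by ring
    rw [this] at h
    exact Int.dvd_of_emod_eq_zero h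
  have hbz := Int.gcd_eq_gcd_ab w.1 w.2
  rw [hg] at hbz
  have hd : (r:ℤ) ∣ ((k:ℤ) - l) := by
    have : ((k:ℤ) - l) = (((k:ℤ) - l) * w.1) * Int.gcdA w.1 w.2
        + (((k:ℤ) - l) * w.2) * Int.gcdB w.1 w.2 := by
      push_cast at hbz
      nlinarith [hbz]
    rw [this]
    exact dvd_add (Dvd.dvd.mul_right hd1 _) (Dvd.dvd.mul_right hd2 _)
  have habs : (r:ℤ) ∣ |(k:ℤ) - l| := (dvd_abs _ _).mpr hd
  have hpos : 0 < |(k:ℤ) - l| := by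
    rw [abs_pos]
    intro h
    apply hkl
    omega
  have := Int.le_of_dvd hpos habs
  have hlt : |(k:ℤ) - l| < r := by
    rcases le_total (k:ℤ) l with h | h
    · rw [abs_of_nonpos (by omega)]; omega
    · rw [abs_of_nonneg (by omega)]; omega
  linarith

end RSeg

/-- For each `r ≥ 2` there is an `r`-segment hypergraph with strong chromatic number
exactly `r²`, in which any two points of the grid `B = {0,...,r-1}²` share an edge. -/
theorem exists_rsegment_strong_chromatic_eq_sq (r : ℕ) (hr : 2 ≤ r) :
    ∃ H : RSegmentHypergraph r,
      (∃ c : ℤ × ℤ → Fin (r ^ 2),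
        ∀ E ∈ H.edges, ∀ p ∈ E, ∀ q ∈ E, p ≠ q → c p ≠ c q) ∧
      (∀ m : ℕ, m < r ^ 2 → ∀ c : ℤ × ℤ → Fin m,
        ¬ ∀ E ∈ H.edges, ∀ p ∈ E, ∀ q ∈ E, p ≠ q → c p ≠ c q) ∧
      (∀ p q : ℤ × ℤ,
        (0 ≤ p.1 ∧ p.1 < r ∧ 0 ≤ p.2 ∧ p.2 < r) →
        (0 ≤ q.1 ∧ q.1 < r ∧ 0 ≤ q.2 ∧ q.2 < r) → p ≠ q →
        ∃ E ∈ H.edges, p ∈ E ∧ q ∈ E) := by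
  classical
  have hr0 : 0 < r := by omega
  have key : ∀ p q : ℤ × ℤ, RSeg.inB r p → RSeg.inB r q → p ≠ q →
      ∃ E ∈ {E | ∃ v w : ℤ × ℤ, RSeg.EData r v w ∧ E = RSeg.seg r v w},
        p ∈ E ∧ q ∈ E := by
    intro p q hp hq hne
    by_cases h : RSeg.Nrm (q.1 - p.1, q.2 - p.2)
    · obtain ⟨v, w, hd, hpm, hqm⟩ := RSeg.shared hr hp hq h
      exact ⟨RSeg.seg r v w, ⟨v, w, hd, rfl⟩, hpm, hqm⟩
    · have hne' : ¬ (q.1 - p.1 = 0 ∧ q.2 - p.2 = 0) := by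
        rintro ⟨h1, h2⟩
        exact hne (Prod.ext (by omega) (by omega))
      have h' : RSeg.Nrm (p.1 - q.1, p.2 - q.2) := by
        unfold RSeg.Nrm at h ⊢
        push_neg at h
        simp only at h hne' ⊢
        omega
      obtain ⟨v, w, hd, hqm, hpm⟩ := RSeg.shared hr hq hp h'
      exact ⟨RSeg.seg r v w, ⟨v, w, hd, rfl⟩, hpm, hqm⟩
  refine ⟨⟨{E | ∃ v w : ℤ × ℤ, RSeg.EData r v w ∧ E = RSeg.seg r v w}, ?_, ?_⟩, ?_, ?_, ?_⟩
  · rintro E ⟨v, w, hd, rfl⟩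
    exact ⟨v, w, hd.1, rfl⟩
  · rintro E ⟨v, w, hd, rfl⟩ F ⟨v', w', hd', rfl⟩ H
    exact RSeg.line_unique_aux hr hd hd' H
  · refine ⟨RSeg.col r hr0, ?_⟩
    rintro E ⟨v, w, hd, rfl⟩ p hp q hq hne
    exact RSeg.col_proper hr0 hd.1 hp hq hne
  · -- lower bound
    intro m hm c hc
    set G : Finset (ℤ × ℤ) := Finset.Ico (0:ℤ) (r:ℤ) ×ˢ Finset.Ico (0:ℤ) (r:ℤ) with hGdef
    have hmemG : ∀ p : ℤ × ℤ, p ∈ G ↔ RSeg.inB r p := by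
      intro p
      simp [hGdef, Finset.mem_product, Finset.mem_Ico, RSeg.inB, and_assoc]
    have hinj : Set.InjOn c G := by
      intro p hp q hq hcpq
      by_contra hne
      obtain ⟨E, hE, hpE, hqE⟩ := key p q ((hmemG p).mp hp) ((hmemG q).mp hq) hne
      exact hc E hE p hpE q hqE hne hcpq
    have hcard := Finset.card_le_card_of_injOn c
      (fun x _ => Finset.mem_univ (c x)) hinj
    have hG : G.card = r * r := by
      rw [hGdef, Finset.card_product, Int.card_Ico]
      simp
    rw [hG, Finset.card_univ, Fintype.card_fin] at hcard
    rw [pow_two] at hm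
    omega
  · -- grid points pairwise share an edge
    intro p q hp hq hne
    exact key p q hp hq hne
end
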